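/- arXiv:2403.17857 — 4 statements merged into one kernel-verified Lean document; each statement's English description precedes it below -/
import Mathlib

section
/- Let U_s, ρ_s : [-1,1] → ℝ be smooth with U_s' nonvanishing, and suppose the Miles–Howard condition holds: for all z ∈ [-1,1], -ρ_s'(z)/|U_s'(z)|² ≥ 1/4. Then the hydrostatic Taylor–Goldstein eigenvalue problem (U_s - c)² ψ'' - (U_s - c) U_s'' ψ = ρ_s' ψ on (-1,1) with ψ(±1) = 0 has no nontrivial solution ψ ∈ H²(-1,1) for any c ∈ ℂ with Im(c) ≠ 0. -/
open Set MeasureTheory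

private lemma mh_key (u' u'' ρ' b s : ℝ) (m p q : ℂ)
    (hmim : m.im = -b) (hb : b ≠ 0) (hspos : 0 < s)
    (hs : s^2 = m.re^2 + b^2) :
    -(2 * m.re * u' / (2*s)) / s^2 * (m * q * star p).im
      + s⁻¹ * (((u' : ℂ) * q + m * (((ρ' : ℂ)*p + m*(u'':ℂ)*p)/m^2)) * star p + m * q * star q).im
    = -b * (s⁻¹ * (Complex.normSq (2*m*q - (u':ℂ)*p)/(4*(m.re^2+b^2))
        + (-ρ' - u'^2/4) * Complex.normSq p / (m.re^2+b^2))) := by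
  have hs0 : s ≠ 0 := hspos.ne'
  have hb2 : (0:ℝ) < b^2 := lt_of_le_of_ne (sq_nonneg b) (Ne.symm (pow_ne_zero 2 hb))
  have hRpos : (0:ℝ) < m.re^2 + b^2 := by nlinarith [sq_nonneg m.re]
  have hm0 : m ≠ 0 := by
    intro h; rw [h] at hmim; simp at hmim; exact hb hmim
  have hmid : (m * (((ρ' : ℂ)*p + m*(u'':ℂ)*p)/m^2)) = ((ρ' : ℂ)/m) * p + (u'':ℂ)*p := by
    field_simp [hm0]
  have e1 : -(2 * m.re * u' / (2*s)) / s^2 = -(m.re * u' * s) / ((m.re^2+b^2)^2) := by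
    rw [← hs]; field_simp
  have e2 : s⁻¹ = s / (m.re^2+b^2) := by
    rw [← hs]; field_simp [pow_two]
  rw [e1, e2, hmid]
  have hnm : Complex.normSq m = m.re^2 + b^2 := by
    rw [Complex.normSq_apply, hmim]; ring
  simp only [Complex.mul_im, Complex.mul_re, Complex.add_im, Complex.add_re,
    Complex.div_im, Complex.div_re, Complex.sub_im, Complex.sub_re,
    Complex.ofReal_re, Complex.ofReal_im, Complex.star_def, Complex.conj_re,
    Complex.conj_im, Complex.normSq_apply, hnm, hmim]
  rw [Complex.normSq_apply, hmim] at hnm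
  field_simp
  have h2re : (2:ℂ).re = 2 := by norm_num
  have h2im : (2:ℂ).im = 0 := by norm_num
  simp only [h2re, h2im]
  ring

/-- **Miles–Howard criterion implies spectral stability (hydrostatic case).**
If the stratified shear flow `(ρ_s, U_s)` satisfies the Miles–Howard condition
`-ρ_s'(z)/|U_s'(z)|² ≥ 1/4` on `[-1,1]`, then the hydrostatic Taylor–Goldstein
eigenvalue problem `(U_s - c)² ψ'' - (U_s - c) U_s'' ψ = ρ_s' ψ` on `(-1,1)`,
with `ψ(±1) = 0`, has no nontrivial solution for any `c` with `Im c ≠ 0`. -/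
theorem milesHoward_no_growing_mode
    (U ρ : ℝ → ℝ) (hU : ContDiff ℝ (⊤ : ℕ∞) U) (hρ : ContDiff ℝ (⊤ : ℕ∞) ρ)
    (hU' : ∀ z ∈ Icc (-1:ℝ) 1, deriv U z ≠ 0)
    (hMH : ∀ z ∈ Icc (-1:ℝ) 1, (1:ℝ)/4 ≤ -deriv ρ z / (deriv U z)^2)
    (c : ℂ) (hc : c.im ≠ 0)
    (ψ : ℝ → ℂ) (hψ : ContDiff ℝ 2 ψ)
    (hbc₁ : ψ (-1) = 0) (hbc₂ : ψ 1 = 0)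
    (heq : ∀ z ∈ Ioo (-1:ℝ) 1,
      (Complex.ofReal (U z) - c)^2 * deriv (deriv ψ) z
        - (Complex.ofReal (U z) - c) * Complex.ofReal (iteratedDeriv 2 U z) * ψ z
      = Complex.ofReal (deriv ρ z) * ψ z) :
    ∀ z ∈ Icc (-1:ℝ) 1, ψ z = 0 := by
  -- basic regularity
  have hψdiff : Differentiable ℝ ψ := hψ.differentiable (by norm_num)
  have hψd : ContDiff ℝ 1 (deriv ψ) := by
    have h2 : ContDiff ℝ ((1:ℕ) + 1) ψ := by exact_mod_cast hψ
    exact (contDiff_succ_iff_deriv.mp h2).2.2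
  have hψ'diff : Differentiable ℝ (deriv ψ) := hψd.differentiable one_ne_zero
  have hcψ' : Continuous (deriv ψ) := hψd.continuous
  have hUdiff : Differentiable ℝ U := hU.differentiable (by simp)
  have hcU' : Continuous (deriv U) := hU.continuous_deriv (by simp)
  -- notation
  set a : ℝ := c.re with ha
  set b : ℝ := c.im with hbdef
  have hb0 : b ≠ 0 := hc
  set m : ℝ → ℂ := fun t => (U t : ℂ) - c with hm
  have hmre : ∀ t, (m t).re = U t - a := fun t => by simp [hm, ha]
  have hmim : ∀ t, (m t).im = -b := fun t => by simp [hm, hbdef]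
  have hm0 : ∀ t, m t ≠ 0 := by
    intro t h
    have := congrArg Complex.im h
    rw [hmim t] at this
    simp at this
    exact hb0 this
  set r : ℝ → ℝ := fun t => (U t - a)^2 + b^2 with hr
  have hb2 : (0:ℝ) < b^2 := lt_of_le_of_ne (sq_nonneg b) (Ne.symm (pow_ne_zero 2 hb0))
  have hrpos : ∀ t, 0 < r t := fun t => by
    have := sq_nonneg (U t - a); simp only [hr]; nlinarith
  have hs_pos : ∀ t, 0 < Real.sqrt (r t) := fun t => Real.sqrt_pos.mpr (hrpos t)
  have hs_sq : ∀ t, (Real.sqrt (r t))^2 = (m t).re^2 + b^2 := fun t => by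
    rw [Real.sq_sqrt (hrpos t).le, hmre t]
  set w : ℝ → ℝ := fun t => (Real.sqrt (r t))⁻¹ with hwdef
  have hwpos : ∀ t, 0 < w t := fun t => inv_pos.mpr (hs_pos t)
  set g : ℝ → ℝ := fun t =>
    w t * (Complex.normSq (2 * m t * deriv ψ t - Complex.ofReal (deriv U t) * ψ t) / (4 * ((m t).re^2 + b^2))
      + (-(deriv ρ t) - (deriv U t)^2/4) * Complex.normSq (ψ t) / ((m t).re^2 + b^2)) with hgdef
  set β : ℝ → ℝ := fun t => w t * (m t * deriv ψ t * star (ψ t)).im with hβdef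
  -- continuity
  have hcm : Continuous m := (Complex.continuous_ofReal.comp hU.continuous).sub continuous_const
  have hcr : Continuous r := ((hU.continuous.sub continuous_const).pow 2).add continuous_const
  have hcw : Continuous w := (hcr.sqrt).inv₀ (fun t => (hs_pos t).ne')
  have hcmre : Continuous fun t => (m t).re ^ 2 + b ^ 2 := by
    exact ((Complex.continuous_re.comp hcm).pow 2).add continuous_const
  have hmre_pos : ∀ t, 0 < (m t).re^2 + b^2 := fun t => by nlinarith [sq_nonneg ((m t).re)]
  have hcρ' : Continuous (deriv ρ) := hρ.continuous_deriv (by simp)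
  have hcg : Continuous g := by
    apply hcw.mul
    apply Continuous.add
    · exact (Complex.continuous_normSq.comp
        (((continuous_const.mul hcm).mul hcψ').sub
          ((Complex.continuous_ofReal.comp hcU').mul hψ.continuous))).div
        (continuous_const.mul hcmre) (fun t => by positivity)
    · exact ((hcρ'.neg.sub ((hcU'.pow 2).div_const 4)).mul
        (Complex.continuous_normSq.comp hψ.continuous)).div hcmre (fun t => (hmre_pos t).ne')
  have hcβ : Continuous β :=
    hcw.mul (Complex.continuous_im.comp ((hcm.mul hcψ').mul (continuous_star.comp hψ.continuous)))
  -- Miles–Howard pointwise sign condition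
  have hMH' : ∀ t ∈ Icc (-1:ℝ) 1, 0 ≤ -(deriv ρ t) - (deriv U t)^2/4 := by
    intro t ht
    have h1 := hMH t ht
    have h2 : (0:ℝ) < (deriv U t)^2 :=
      lt_of_le_of_ne (sq_nonneg _) (Ne.symm (pow_ne_zero 2 (hU' t ht)))
    rw [le_div_iff₀ h2] at h1
    linarith
  have hgnn : ∀ t ∈ Icc (-1:ℝ) 1, 0 ≤ g t := by
    intro t ht
    have h1 : 0 ≤ Complex.normSq (2 * m t * deriv ψ t - Complex.ofReal (deriv U t) * ψ t)
        / (4 * ((m t).re^2 + b^2)) :=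
      div_nonneg (Complex.normSq_nonneg _) (by positivity)
    have h2 : 0 ≤ (-(deriv ρ t) - (deriv U t)^2/4) * Complex.normSq (ψ t) / ((m t).re^2 + b^2) :=
      div_nonneg (mul_nonneg (hMH' t ht) (Complex.normSq_nonneg _)) (hmre_pos t).le
    have := (hwpos t).le
    simp only [hgdef]
    positivity
  -- the key derivative identity
  have hderiv : ∀ z ∈ Ioo (-1:ℝ) 1, HasDerivAt β (-b * g z) z := by
    intro z hz
    have hdU : HasDerivAt U (deriv U z) z := (hUdiff z).hasDerivAt
    have hdψz : HasDerivAt ψ (deriv ψ z) z := (hψdiff z).hasDerivAt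
    have hdψ'z : HasDerivAt (deriv ψ) (deriv (deriv ψ) z) z := (hψ'diff z).hasDerivAt
    have hdm : HasDerivAt m (Complex.ofReal (deriv U z)) z := by
      simpa [hm] using (hdU.ofReal_comp).sub_const c
    have hdInner : HasDerivAt (fun t => m t * deriv ψ t * star (ψ t))
        ((Complex.ofReal (deriv U z) * deriv ψ z + m z * deriv (deriv ψ) z) * star (ψ z)
          + m z * deriv ψ z * star (deriv ψ z)) z :=
      (hdm.mul hdψ'z).mul hdψz.star
    have hdIm : HasDerivAt (fun t => (m t * deriv ψ t * star (ψ t)).im)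
        (((Complex.ofReal (deriv U z) * deriv ψ z + m z * deriv (deriv ψ) z) * star (ψ z)
          + m z * deriv ψ z * star (deriv ψ z)).im) z :=
      Complex.imCLM.hasFDerivAt.comp_hasDerivAt z hdInner
    have hdr : HasDerivAt r (2 * (U z - a) * deriv U z) z := by
      have := ((hdU.sub_const a).pow 2).add_const (b^2)
      simpa [hr, mul_comm, mul_assoc] using this
    have hds : HasDerivAt (fun t => Real.sqrt (r t))
        ((2 * (U z - a) * deriv U z) / (2 * Real.sqrt (r z))) z := hdr.sqrt (hrpos z).ne'
    have hdw : HasDerivAt w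
        (-((2 * (U z - a) * deriv U z) / (2 * Real.sqrt (r z))) / (Real.sqrt (r z))^2) z :=
      hds.inv (hs_pos z).ne'
    have hdβ := hdw.mul hdIm
    -- identify the derivative value
    have hppne : (m z)^2 ≠ 0 := pow_ne_zero _ (hm0 z)
    have hode : (m z)^2 * deriv (deriv ψ) z - m z * Complex.ofReal (iteratedDeriv 2 U z) * ψ z
        = Complex.ofReal (deriv ρ z) * ψ z := heq z hz
    have hpp : deriv (deriv ψ) z
        = (Complex.ofReal (deriv ρ z) * ψ z + m z * Complex.ofReal (iteratedDeriv 2 U z) * ψ z) / (m z)^2 := by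
      rw [eq_div_iff hppne]
      linear_combination hode
    have hval : -((2 * (U z - a) * deriv U z) / (2 * Real.sqrt (r z))) / (Real.sqrt (r z))^2
          * (m z * deriv ψ z * star (ψ z)).im
        + w z * (((Complex.ofReal (deriv U z) * deriv ψ z + m z * deriv (deriv ψ) z) * star (ψ z)
          + m z * deriv ψ z * star (deriv ψ z)).im)
        = -b * g z := by
      rw [hpp, show U z - a = (m z).re from (hmre z).symm]
      exact mh_key (deriv U z) (iteratedDeriv 2 U z) (deriv ρ z) b (Real.sqrt (r z))
        (m z) (ψ z) (deriv ψ z) (hmim z) hb0 (hs_pos z) (hs_sq z)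
    exact hval ▸ hdβ
  -- fundamental theorem of calculus
  have hint : IntervalIntegrable (fun t => -b * g t) volume (-1:ℝ) 1 :=
    (continuous_const.mul hcg).intervalIntegrable _ _
  have hFTC : ∫ t in (-1:ℝ)..1, (-b * g t) = β 1 - β (-1) :=
    intervalIntegral.integral_eq_sub_of_hasDeriv_right_of_le (by norm_num)
      hcβ.continuousOn (fun x hx => (hderiv x hx).hasDerivWithinAt) hint
  have hβ1 : β 1 = 0 := by simp [hβdef, hbc₂]
  have hβ2 : β (-1) = 0 := by simp [hβdef, hbc₁]
  have hgint : ∫ t in (-1:ℝ)..1, g t = 0 := by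
    have h1 : ∫ t in (-1:ℝ)..1, (-b * g t) = -b * ∫ t in (-1:ℝ)..1, g t :=
      intervalIntegral.integral_const_mul _ _
    rw [hFTC, hβ1, hβ2] at h1
    have := h1.symm
    simp only [sub_zero, zero_sub, neg_eq_zero] at this
    rcases mul_eq_zero.mp (by linarith [this] : -b * ∫ t in (-1:ℝ)..1, g t = 0) with h | h
    · exact absurd (neg_eq_zero.mp h) hb0
    · exact h
  -- nonnegative continuous function with zero integral vanishes
  have hae : g =ᵐ[volume.restrict (Ioc (-1:ℝ) 1)] 0 := by
    refine (intervalIntegral.integral_eq_zero_iff_of_le_of_nonneg_ae (by norm_num) ?_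
      (hcg.intervalIntegrable _ _)).mp hgint
    refine (ae_restrict_iff' measurableSet_Ioc).mpr (ae_of_all _ fun x hx => ?_)
    exact hgnn x ⟨hx.1.le, hx.2⟩
  have haeIcc : g =ᵐ[volume.restrict (Icc (-1:ℝ) 1)] 0 := by
    rwa [← Measure.restrict_congr_set Ioc_ae_eq_Icc]
  have hg0 : EqOn g 0 (Icc (-1:ℝ) 1) :=
    Measure.eqOn_Icc_of_ae_eq (volume) (by norm_num) haeIcc hcg.continuousOn
      continuousOn_const
  -- from g = 0 deduce the first-order relation
  have hrel : ∀ t ∈ Icc (-1:ℝ) 1, 2 * m t * deriv ψ t = Complex.ofReal (deriv U t) * ψ t := by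
    intro t ht
    have h0 : g t = 0 := hg0 ht
    have h1 : 0 ≤ Complex.normSq (2 * m t * deriv ψ t - Complex.ofReal (deriv U t) * ψ t)
        / (4 * ((m t).re^2 + b^2)) :=
      div_nonneg (Complex.normSq_nonneg _) (by positivity)
    have h2 : 0 ≤ (-(deriv ρ t) - (deriv U t)^2/4) * Complex.normSq (ψ t) / ((m t).re^2 + b^2) :=
      div_nonneg (mul_nonneg (hMH' t ht) (Complex.normSq_nonneg _)) (hmre_pos t).le
    have hw := hwpos t
    simp only [hgdef] at h0
    have hsum : Complex.normSq (2 * m t * deriv ψ t - Complex.ofReal (deriv U t) * ψ t)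
        / (4 * ((m t).re^2 + b^2))
      + (-(deriv ρ t) - (deriv U t)^2/4) * Complex.normSq (ψ t) / ((m t).re^2 + b^2) = 0 := by
      rcases mul_eq_zero.mp h0 with h | h
      · exact absurd h hw.ne'
      · exact h
    have ht1 : Complex.normSq (2 * m t * deriv ψ t - Complex.ofReal (deriv U t) * ψ t)
        / (4 * ((m t).re^2 + b^2)) = 0 := le_antisymm (by linarith) h1
    have ht2 : Complex.normSq (2 * m t * deriv ψ t - Complex.ofReal (deriv U t) * ψ t) = 0 := by
      rcases div_eq_zero_iff.mp ht1 with h | h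
      · exact h
      · exact absurd h (by positivity : (4:ℝ) * ((m t).re^2 + b^2) ≠ 0)
    have := Complex.normSq_eq_zero.mp ht2
    linear_combination this
  -- Grönwall
  obtain ⟨M, hM⟩ := isCompact_Icc.exists_bound_of_continuousOn
    (hcU'.continuousOn : ContinuousOn (deriv U) (Icc (-1:ℝ) 1))
  have hM0 : 0 ≤ M := le_trans (norm_nonneg _) (hM (-1) (by norm_num))
  set K : ℝ := M / (2 * |b|) with hK
  have hbabs : 0 < |b| := abs_pos.mpr hb0
  have hbound : ∀ x ∈ Ico (-1:ℝ) 1, ‖deriv ψ x‖ ≤ K * ‖ψ x‖ + 0 := by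
    intro x hx
    have hxI : x ∈ Icc (-1:ℝ) 1 := ⟨hx.1, hx.2.le⟩
    have h1 := hrel x hxI
    have h2 : ‖2 * m x * deriv ψ x‖ = ‖Complex.ofReal (deriv U x) * ψ x‖ := by rw [h1]
    have h3 : (2:ℝ) * ‖m x‖ * ‖deriv ψ x‖ = |deriv U x| * ‖ψ x‖ := by
      simpa [norm_mul, Complex.norm_real, mul_assoc] using h2
    have h4 : |b| ≤ ‖m x‖ := by
      have := Complex.abs_im_le_norm (m x)
      rw [hmim x, abs_neg] at this
      simpa using this
    have h5 : |deriv U x| ≤ M := by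
      have := hM x hxI
      simpa [Real.norm_eq_abs] using this
    have h6 : (2:ℝ) * |b| * ‖deriv ψ x‖ ≤ M * ‖ψ x‖ := by
      nlinarith [norm_nonneg (deriv ψ x), norm_nonneg (ψ x), norm_nonneg (m x)]
    rw [add_zero, hK]
    rw [div_mul_eq_mul_div, le_div_iff₀ (by positivity)]
    nlinarith
  have hgr := norm_le_gronwallBound_of_norm_deriv_right_le
    (f := ψ) (f' := deriv ψ) (δ := 0) (K := K) (ε := 0) (a := -1) (b := 1)
    hψ.continuous.continuousOn
    (fun x _ => ((hψdiff x).hasDerivAt).hasDerivWithinAt)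
    (by simp [hbc₁]) hbound
  intro z hz
  have := hgr z hz
  rw [gronwallBound_ε0_δ0] at this
  simpa using le_antisymm this (norm_nonneg _)
end

section
/- Let U_s : [-1,1] → ℝ be smooth and c ∈ ℂ with Im(c) ≠ 0. If φ ∈ H²(-1,1) with φ(±1) = 0 satisfies (U_s - c)² φ'' - (U_s - c) U_s'' φ = ρ_s' φ on (-1,1) for a smooth ρ_s, and φ is not identically zero, then Re(c) lies in the closed interval U_s([-1,1]) (i.e., min U_s ≤ Re(c) ≤ max U_s). -/
open Set intervalIntegral MeasureTheory
open scoped ContDiff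

/-- **Necessary condition for growing modes:** if `φ ∈ H²(-1,1)` with `φ(±1)=0` is a
nontrivial solution of the hydrostatic Taylor–Goldstein equation
`(U_s - c)² φ'' - (U_s - c) U_s'' φ = ρ_s' φ` on `(-1,1)` with `Im c ≠ 0`,
then `Re c` lies in the closed interval `U_s([-1,1])`, i.e.
`min U_s ≤ Re c ≤ max U_s`. -/
theorem growing_mode_speed_in_range
    (U ρ : ℝ → ℝ) (hU : ContDiff ℝ (⊤ : ℕ∞) U) (hρ : ContDiff ℝ (⊤ : ℕ∞) ρ)
    (c : ℂ) (hc : c.im ≠ 0)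
    (φ : ℝ → ℂ) (hφ : ContDiff ℝ 2 φ)
    (hbc₁ : φ (-1) = 0) (hbc₂ : φ 1 = 0)
    (heq : ∀ z ∈ Ioo (-1:ℝ) 1,
      (Complex.ofReal (U z) - c)^2 * deriv (deriv φ) z
        - (Complex.ofReal (U z) - c) * Complex.ofReal (iteratedDeriv 2 U z) * φ z
      = Complex.ofReal (deriv ρ z) * φ z)
    (hnontriv : ∃ z ∈ Icc (-1:ℝ) 1, φ z ≠ 0) :
    sInf (U '' Icc (-1:ℝ) 1) ≤ c.re ∧ c.re ≤ sSup (U '' Icc (-1:ℝ) 1) := by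
  classical
  set d : ℝ → ℂ := fun z => (U z : ℂ) - c with hd
  have hdne : ∀ z : ℝ, d z ≠ 0 := by
    intro z h
    apply hc
    have := congrArg Complex.im h
    simpa [hd] using this.symm
  have hUdiff : Differentiable ℝ U := hU.differentiable (by simp)
  have hUi : ContDiff ℝ ∞ U := hU.of_le (by simp)
  have hU' : ContDiff ℝ ∞ (deriv U) := (contDiff_infty_iff_deriv.mp hUi).2
  have hUd : ∀ z, HasDerivAt U (deriv U z) z := fun z => (hUdiff z).hasDerivAt
  have hU'd : ∀ z, HasDerivAt (deriv U) (deriv (deriv U) z) z :=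
    fun z => ((hU'.differentiable (by simp)) z).hasDerivAt
  have hdC : Continuous d :=
    (Complex.continuous_ofReal.comp hU.continuous).sub continuous_const
  have hdd : ∀ z, HasDerivAt d (Complex.ofReal (deriv U z)) z :=
    fun z => ((hUd z).ofReal_comp).sub_const c
  have hφ2 : ContDiff ℝ ((1:WithTop ℕ∞)+1) φ := by
    have e : ((1:WithTop ℕ∞)+1) = 2 := by norm_num
    rw [e]; exact hφ
  have hφ' : ContDiff ℝ 1 (deriv φ) := (contDiff_succ_iff_deriv.mp hφ2).2.2
  have hφd : ∀ z, HasDerivAt φ (deriv φ z) z :=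
    fun z => (hφ.differentiable (by norm_num) z).hasDerivAt
  have hφ'd : ∀ z, HasDerivAt (deriv φ) (deriv (deriv φ) z) z :=
    fun z => (hφ'.differentiable (by simp) z).hasDerivAt
  have hcφ' : Continuous (deriv φ) := hφ'.continuous
  have hcφ'' : Continuous (deriv (deriv φ)) := hφ'.continuous_deriv le_rfl
  set w : ℝ → ℂ := fun z => φ z / d z with hw
  set w1 : ℝ → ℂ := fun z =>
    (deriv φ z * d z - φ z * Complex.ofReal (deriv U z)) / d z ^ 2 with hw1
  have hwd : ∀ z, HasDerivAt w (w1 z) z := fun z => (hφd z).div (hdd z) (hdne z)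
  have hcw : Continuous w := hφ.continuous.div hdC hdne
  have hcw1 : Continuous w1 := by
    apply Continuous.div
    · exact (hcφ'.mul hdC).sub (hφ.continuous.mul (Complex.continuous_ofReal.comp hU'.continuous))
    · exact hdC.pow 2
    · intro z; exact pow_ne_zero 2 (hdne z)
  set F : ℝ → ℂ := fun z => d z * deriv φ z - Complex.ofReal (deriv U z) * φ z with hF
  set F1 : ℝ → ℂ := fun z =>
    d z * deriv (deriv φ) z - Complex.ofReal (deriv (deriv U) z) * φ z with hF1
  have hFd : ∀ z, HasDerivAt F (F1 z) z := by
    intro z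
    have h1 := ((hdd z).mul (hφ'd z)).sub (((hU'd z).ofReal_comp).mul (hφd z))
    exact h1.congr_deriv (by simp only [hF1]; ring)
  have hcF : Continuous F := (hdC.mul hcφ').sub
    ((Complex.continuous_ofReal.comp hU'.continuous).mul hφ.continuous)
  have hcF1 : Continuous F1 := (hdC.mul hcφ'').sub
    ((Complex.continuous_ofReal.comp (hU'.continuous_deriv (by exact_mod_cast le_top))).mul hφ.continuous)
  -- the equation in terms of F1 and w
  have hF1eq : ∀ z ∈ Ioo (-1:ℝ) 1, F1 z = Complex.ofReal (deriv ρ z) * w z := by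
    intro z hz
    have h := heq z hz
    have h2 : iteratedDeriv 2 U z = deriv (deriv U) z := by
      rw [iteratedDeriv_succ, iteratedDeriv_one]
    rw [h2] at h
    have ha := hdne z
    simp only [hF1, hw, hd] at *
    field_simp
    linear_combination h
  -- boundary values of w
  have hwbc1 : w (-1) = 0 := by simp [hw, hbc₁]
  have hwbc2 : w 1 = 0 := by simp [hw, hbc₂]
  -- integration by parts
  have hibp : ∫ z in (-1:ℝ)..1, (starRingEnd ℂ) (w z) * F1 z
      = - ∫ z in (-1:ℝ)..1, (starRingEnd ℂ) (w1 z) * F z := by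
    have h := integral_mul_deriv_eq_deriv_mul
      (u := fun z => (starRingEnd ℂ) (w z)) (u' := fun z => (starRingEnd ℂ) (w1 z))
      (v := F) (v' := F1) (a := (-1:ℝ)) (b := 1)
      (fun x _ => (hwd x).star) (fun x _ => hFd x)
      (((continuous_star.comp hcw1)).intervalIntegrable _ _)
      (hcF1.intervalIntegrable _ _)
    rw [h]
    simp [hwbc1, hwbc2]
  -- rewrite LHS as a real integral
  have hLHS : ∫ z in (-1:ℝ)..1, (starRingEnd ℂ) (w z) * F1 z
      = ((∫ z in (-1:ℝ)..1, deriv ρ z * ‖w z‖^2 : ℝ) : ℂ) := by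
    rw [← intervalIntegral.integral_ofReal]
    apply intervalIntegral.integral_congr_ae
    have h1 : ∀ᵐ x : ℝ ∂(volume : Measure ℝ), x ∉ ({1} : Set ℝ) :=
      compl_mem_ae_iff.mpr (measure_singleton 1)
    filter_upwards [h1] with x hx hmem
    rw [uIoc_of_le (by norm_num : (-1:ℝ) ≤ 1)] at hmem
    have hxo : x ∈ Ioo (-1:ℝ) 1 := ⟨hmem.1, lt_of_le_of_ne hmem.2 (by simpa using hx)⟩
    rw [hF1eq x hxo]
    have hcj : (starRingEnd ℂ) (w x) * w x = ((‖w x‖ ^ 2 : ℝ) : ℂ) := by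
      rw [← Complex.normSq_eq_conj_mul_self, Complex.sq_norm]
    push_cast at hcj ⊢
    linear_combination (Complex.ofReal (deriv ρ x)) * hcj
  -- rewrite RHS integrand
  have hRHS : ∫ z in (-1:ℝ)..1, (starRingEnd ℂ) (w1 z) * F z
      = ∫ z in (-1:ℝ)..1, d z ^ 2 * ((‖w1 z‖ ^ 2 : ℝ) : ℂ) := by
    apply intervalIntegral.integral_congr
    intro z _
    show (starRingEnd ℂ) (w1 z) * F z = d z ^ 2 * ((‖w1 z‖ ^ 2 : ℝ) : ℂ)
    have hFw : F z = d z ^ 2 * w1 z := by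
      have ha := hdne z
      simp only [hF, hw1]
      field_simp
    rw [hFw]
    have hcj : (starRingEnd ℂ) (w1 z) * w1 z = ((‖w1 z‖ ^ 2 : ℝ) : ℂ) := by
      rw [← Complex.normSq_eq_conj_mul_self, Complex.sq_norm]
    linear_combination (d z ^ 2) * hcj
  -- take imaginary parts
  set A : ℝ → ℝ := fun z => ‖w1 z‖ ^ 2 with hA
  have hcA : Continuous A := (continuous_norm.comp hcw1).pow 2
  have him : ∫ z in (-1:ℝ)..1, (U z - c.re) * A z = 0 := by
    have h := congrArg Complex.im (hLHS.symm.trans (hibp.trans (congrArg Neg.neg hRHS)))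
    rw [Complex.ofReal_im, Complex.neg_im] at h
    have h2 : (∫ z in (-1:ℝ)..1, d z ^ 2 * ((A z : ℝ) : ℂ)).im
        = ∫ z in (-1:ℝ)..1, (d z ^ 2 * ((A z : ℝ) : ℂ)).im := by
      rw [integral_of_le (by norm_num : (-1:ℝ) ≤ 1),
        integral_of_le (by norm_num : (-1:ℝ) ≤ 1)]
      have hint : IntegrableOn (fun z => d z ^ 2 * ((A z : ℝ) : ℂ)) (Ioc (-1:ℝ) 1) volume :=
        (((hdC.pow 2).mul (Complex.continuous_ofReal.comp hcA)).integrableOn_Ioc)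
      have := (integral_im hint).symm
      simpa [RCLike.im_eq_complex_im] using this
    rw [h2] at h
    have h3 : ∀ z : ℝ, (d z ^ 2 * ((A z : ℝ) : ℂ)).im = (-2 * c.im) * ((U z - c.re) * A z) := by
      intro z
      simp only [Complex.mul_im, Complex.ofReal_re, Complex.ofReal_im, sq, hd,
        Complex.sub_re, Complex.sub_im, Complex.mul_re]
      ring
    simp only [h3] at h
    rw [intervalIntegral.integral_const_mul] at h
    have h4 : (-2 * c.im) * (∫ z in (-1:ℝ)..1, (U z - c.re) * A z) = 0 := by linarith
    rcases mul_eq_zero.mp h4 with h5 | h5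
    · exact absurd (by linarith) hc
    · exact h5
  -- key: the integral of A vanishing gives a contradiction
  have key : (∫ z in (-1:ℝ)..1, A z) = 0 → False := by
    intro hJ
    have hInt : IntegrableOn A (Ioc (-1:ℝ) 1) volume := hcA.integrableOn_Ioc
    have h0 : A =ᵐ[volume.restrict (Ioc (-1:ℝ) 1)] 0 := by
      rw [integral_of_le (by norm_num : (-1:ℝ) ≤ 1)] at hJ
      exact (integral_eq_zero_iff_of_nonneg (fun z => sq_nonneg _) hInt).mp hJ
    have hw10 : w1 =ᵐ[volume.restrict (Ioc (-1:ℝ) 1)] 0 := by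
      filter_upwards [h0] with x hx
      have h1 : ‖w1 x‖ ^ 2 = 0 := hx
      have h2 : ‖w1 x‖ = 0 := by
        nlinarith [norm_nonneg (w1 x)]
      simpa using h2
    have hwz : ∀ z ∈ Icc (-1:ℝ) 1, w z = 0 := by
      intro z hz
      have hftc : ∫ x in (-1:ℝ)..z, w1 x = w z - w (-1) :=
        integral_eq_sub_of_hasDerivAt (fun x _ => hwd x) (hcw1.intervalIntegrable _ _)
      have hz0 : ∫ x in (-1:ℝ)..z, w1 x = 0 := by
        rw [integral_of_le hz.1]
        apply integral_eq_zero_of_ae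
        exact ae_restrict_of_ae_restrict_of_subset (Ioc_subset_Ioc_right hz.2) hw10
      rw [hz0, hwbc1] at hftc
      linear_combination -hftc
    obtain ⟨z, hz, hphi⟩ := hnontriv
    apply hphi
    have h1 := hwz z hz
    simp only [hw] at h1
    rcases div_eq_zero_iff.mp h1 with h | h
    · exact h
    · exact absurd h (hdne z)
  -- compactness facts
  have hbddA : BddAbove (U '' Icc (-1:ℝ) 1) := (isCompact_Icc.image hU.continuous).bddAbove
  have hbddB : BddBelow (U '' Icc (-1:ℝ) 1) := (isCompact_Icc.image hU.continuous).bddBelow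
  have hJnn : 0 ≤ ∫ z in (-1:ℝ)..1, A z :=
    intervalIntegral.integral_nonneg (by norm_num) (fun x _ => sq_nonneg _)
  have hIA : IntervalIntegrable A volume (-1:ℝ) 1 := hcA.intervalIntegrable _ _
  have hIUA : IntervalIntegrable (fun z => (U z - c.re) * A z) volume (-1:ℝ) 1 :=
    (((hU.continuous.sub continuous_const).mul hcA).intervalIntegrable _ _)
  constructor
  · by_contra hcon
    push_neg at hcon
    set m := sInf (U '' Icc (-1:ℝ) 1) with hm
    have hε : 0 < m - c.re := by linarith
    have hmono : (m - c.re) * ∫ z in (-1:ℝ)..1, A z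
        ≤ ∫ z in (-1:ℝ)..1, (U z - c.re) * A z := by
      rw [← intervalIntegral.integral_const_mul]
      apply intervalIntegral.integral_mono_on (by norm_num)
        ((continuous_const.mul hcA).intervalIntegrable _ _) hIUA
      intro x hx
      have h1 : m ≤ U x := csInf_le hbddB (mem_image_of_mem U hx)
      have hAx : 0 ≤ A x := by simp only [hA]; positivity
      simp only [Pi.mul_apply]
      nlinarith
    apply key
    nlinarith [him]
  · by_contra hcon
    push_neg at hcon
    set M := sSup (U '' Icc (-1:ℝ) 1) with hM
    have hε : 0 < c.re - M := by linarith
    have hmono : ∫ z in (-1:ℝ)..1, (U z - c.re) * A z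
        ≤ (M - c.re) * ∫ z in (-1:ℝ)..1, A z := by
      rw [← intervalIntegral.integral_const_mul]
      apply intervalIntegral.integral_mono_on (by norm_num) hIUA
        ((continuous_const.mul hcA).intervalIntegrable _ _)
      intro x hx
      have h1 : U x ≤ M := le_csSup hbddA (mem_image_of_mem U hx)
      have hAx : 0 ≤ A x := by simp only [hA]; positivity
      simp only [Pi.mul_apply]
      nlinarith
    apply key
    nlinarith [him]
end

section
/- Under the hypotheses of the previous operator bound, for each fixed r > 0 there exists α_r ∈ (1/2, 1) such that for every c with Im(c) > r, Re(c) ∈ U_s([-1,1]) and every α ∈ (α_r, 1), the fixed-point equation Φ(z) = D_α^z(c) + (1 - α) S_{α,c}[Φ](z), where D_α^z(c) = ∫_{-1}^{z} (U_s(r) - c)^{-2α} dr, has a unique solution Φ_{α,c} ∈ Y, given by the convergent Neumann series Φ_{α,c} = Σ_{n≥0} (1-α)^n S_{α,c}^n[D_α(c)]. -/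
open Set

/-- The space `Y = {f ∈ W^{1,∞}(-1,1) : f(-1) = 0}`. -/
def memY (f : ℝ → ℂ) : Prop :=
  f (-1) = 0 ∧ ∃ L : NNReal, LipschitzOnWith L f (Icc (-1:ℝ) 1)

/-- The operator `S_{α,c}`. -/
noncomputable def Sop (U : ℝ → ℝ) (α : ℝ) (c : ℂ) (f : ℝ → ℂ) : ℝ → ℂ :=
  fun z => ∫ r in (-1:ℝ)..z,
    (Complex.ofReal (U r) - c) ^ ((-(2*α) : ℝ) : ℂ) *
      ∫ q in (-1:ℝ)..r,
        (Complex.ofReal (U q) - c) ^ ((2*α - 1 : ℝ) : ℂ) *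
          Complex.ofReal (iteratedDeriv 2 U q) * f q

/-- `D_α^z(c) = ∫_{-1}^z (U(r)-c)^{-2α} dr`. -/
noncomputable def Dfun (U : ℝ → ℝ) (α : ℝ) (c : ℂ) : ℝ → ℂ :=
  fun z => ∫ r in (-1:ℝ)..z, (Complex.ofReal (U r) - c) ^ ((-(2*α) : ℝ) : ℂ)

namespace FPN
variable (U : ℝ → ℝ) (α : ℝ) (c : ℂ)

noncomputable def g1 : ℝ → ℂ := fun t => (Complex.ofReal (U t) - c) ^ ((-(2*α) : ℝ) : ℂ)
noncomputable def g2 : ℝ → ℂ := fun t =>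
  (Complex.ofReal (U t) - c) ^ ((2*α - 1 : ℝ) : ℂ) * Complex.ofReal (iteratedDeriv 2 U t)

lemma Sop_eq (f : ℝ → ℂ) :
    Sop U α c f = fun z => ∫ r in (-1:ℝ)..z, g1 U α c r * ∫ q in (-1:ℝ)..r, g2 U α c q * f q := by
  funext z
  simp only [Sop, g1, g2, mul_assoc]

variable {c} in
lemma base_ne (hc : c.im ≠ 0) (t : ℝ) : (Complex.ofReal (U t) - c) ≠ 0 := by
  intro h
  have : (Complex.ofReal (U t) - c).im = 0 := by rw [h]; rfl
  simp [Complex.sub_im] at this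
  exact hc this

variable {c} in
lemma base_mem (hc : c.im ≠ 0) (t : ℝ) : (Complex.ofReal (U t) - c) ∈ Complex.slitPlane := by
  rw [Complex.mem_slitPlane_iff]
  right
  simp [Complex.sub_im, hc]

variable {U c} in
lemma cont_cpow (hU : Continuous U) (hc : c.im ≠ 0) (s : ℝ) :
    Continuous fun t => (Complex.ofReal (U t) - c) ^ ((s : ℝ) : ℂ) := by
  rw [continuous_iff_continuousAt]
  intro t
  have h1 : Continuous fun t : ℝ => (Complex.ofReal (U t) - c) :=
    (Complex.continuous_ofReal.comp hU).sub continuous_const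
  exact h1.continuousAt.cpow continuousAt_const (base_mem U hc t)

variable {U c} in
lemma cont_g1 (hU : Continuous U) (hc : c.im ≠ 0) : Continuous (g1 U α c) :=
  cont_cpow hU hc _

variable {U c} in
lemma cont_g2 (hU : Continuous U) (hU2 : Continuous (iteratedDeriv 2 U)) (hc : c.im ≠ 0) :
    Continuous (g2 U α c) :=
  (cont_cpow hU hc _).mul (Complex.continuous_ofReal.comp hU2)

variable {U c} in
lemma norm_cpow_le {r s : ℝ} (hr : 0 < r) (him : r < c.im) (t : ℝ) :
    ‖(Complex.ofReal (U t) - c) ^ ((s : ℝ) : ℂ)‖ = ‖Complex.ofReal (U t) - c‖ ^ s := by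
  have hne : (Complex.ofReal (U t) - c) ≠ 0 :=
    base_ne U (hr.trans him).ne' t
  rw [Complex.norm_cpow_of_ne_zero hne]
  simp

end FPN

namespace FPN2
open FPN
variable {U : ℝ → ℝ} {α : ℝ} {c : ℂ} {r C0 C2 : ℝ}

noncomputable def K1 (r C0 C2 : ℝ) : ℝ := ((1 + 2*C0/r)/r) * C2
noncomputable def LD (r : ℝ) : ℝ := max (r ^ (-2:ℝ)) 1

lemma norm_base_lb (hr : 0 < r) (him : r < c.im) (t : ℝ) :
    r < ‖Complex.ofReal (U t) - c‖ := by
  have h1 : |(Complex.ofReal (U t) - c).im| ≤ ‖Complex.ofReal (U t) - c‖ := by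
    exact Complex.abs_im_le_norm _
  have h2 : (Complex.ofReal (U t) - c).im = -c.im := by simp
  rw [h2, abs_neg, abs_of_pos (hr.trans him)] at h1
  linarith

lemma g1_bound (hr : 0 < r) (him : r < c.im) (hα : 1/2 < α) (hα1 : α ≤ 1) (t : ℝ) :
    ‖g1 U α c t‖ ≤ LD r := by
  set a := ‖Complex.ofReal (U t) - c‖ with ha
  have hra : r < a := norm_base_lb hr him t
  rw [g1, norm_cpow_le hr him]
  have h1 : a ^ (-(2*α)) ≤ r ^ (-(2*α)) :=
    Real.rpow_le_rpow_of_nonpos hr hra.le (by linarith)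
  rcases le_total r 1 with h | h
  · refine le_trans h1 (le_trans ?_ (le_max_left _ _))
    exact Real.rpow_le_rpow_of_exponent_ge hr h (by linarith)
  · refine le_trans h1 (le_trans ?_ (le_max_right _ _))
    calc r ^ (-(2*α)) ≤ r ^ (0:ℝ) :=
          Real.rpow_le_rpow_of_exponent_le h (by linarith)
      _ = 1 := Real.rpow_zero r

lemma LD_pos (hr : 0 < r) : 0 < LD r := lt_of_lt_of_le one_pos (le_max_right _ _)

lemma key_bound (hr : 0 < r) (him : r < c.im) (hα : 1/2 < α) (hα1 : α ≤ 1)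
    (hC0 : ∀ x ∈ Icc (-1:ℝ) 1, |U x| ≤ C0)
    (hC2 : ∀ x ∈ Icc (-1:ℝ) 1, |iteratedDeriv 2 U x| ≤ C2)
    {x y : ℝ} (hx : x ∈ Icc (-1:ℝ) 1) (hy : y ∈ Icc (-1:ℝ) 1) :
    ‖g1 U α c x * g2 U α c y‖ ≤ K1 r C0 C2 := by
  have hm : (-1:ℝ) ∈ Icc (-1:ℝ) 1 := by constructor <;> norm_num
  have hC0' : 0 ≤ C0 := le_trans (abs_nonneg _) (hC0 _ hm)
  have hC2' : 0 ≤ C2 := le_trans (abs_nonneg _) (hC2 _ hm)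
  set a := ‖Complex.ofReal (U x) - c‖ with hadef
  set b := ‖Complex.ofReal (U y) - c‖ with hbdef
  have hra : r < a := norm_base_lb hr him x
  have hrb : r < b := norm_base_lb hr him y
  have ha : 0 < a := hr.trans hra
  have hb : 0 < b := hr.trans hrb
  have hba : b ≤ a * (1 + 2*C0/r) := by
    have h1 : b ≤ 2*C0 + a := by
      calc b = ‖(Complex.ofReal (U y) - Complex.ofReal (U x)) + (Complex.ofReal (U x) - c)‖ := by
            rw [hbdef]; ring_nf
        _ ≤ ‖Complex.ofReal (U y) - Complex.ofReal (U x)‖ + a := norm_add_le _ _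
        _ ≤ 2*C0 + a := by
            rw [← Complex.ofReal_sub, Complex.norm_real, Real.norm_eq_abs]
            have := abs_sub_abs_le_abs_sub (U y) (U x)
            have h2 := hC0 x hx
            have h3 := hC0 y hy
            have := abs_sub (U y) (U x)
            gcongr
            calc |U y - U x| ≤ |U y| + |U x| := abs_sub _ _
              _ ≤ 2*C0 := by linarith
    have h2 : 2*C0 ≤ a * (2*C0/r) := by
      rw [mul_div_assoc']
      rw [le_div_iff₀ hr]
      nlinarith
    nlinarith
  have hexp : (0:ℝ) ≤ 2*α - 1 := by linarith
  have h1p : (1:ℝ) ≤ 1 + 2*C0/r := by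
    have : 0 ≤ 2*C0/r := by positivity
    linarith
  have hbp : b ^ (2*α-1) ≤ (1 + 2*C0/r) * a ^ (2*α-1) := by
    calc b ^ (2*α-1) ≤ (a * (1 + 2*C0/r)) ^ (2*α-1) :=
          Real.rpow_le_rpow hb.le hba hexp
      _ = a ^ (2*α-1) * (1 + 2*C0/r) ^ (2*α-1) :=
          Real.mul_rpow ha.le (by linarith)
      _ ≤ a ^ (2*α-1) * (1 + 2*C0/r) := by
          have : (1 + 2*C0/r) ^ (2*α-1) ≤ (1 + 2*C0/r) ^ (1:ℝ) :=
            Real.rpow_le_rpow_of_exponent_le h1p (by linarith)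
          rw [Real.rpow_one] at this
          have h0 : (0:ℝ) ≤ a ^ (2*α-1) := Real.rpow_nonneg ha.le _
          nlinarith
      _ = (1 + 2*C0/r) * a ^ (2*α-1) := by ring
  calc ‖g1 U α c x * g2 U α c y‖
      = a ^ (-(2*α)) * (b ^ (2*α-1) * |iteratedDeriv 2 U y|) := by
        rw [norm_mul, g1, g2, norm_mul, norm_cpow_le hr him, norm_cpow_le hr him,
          Complex.norm_real, Real.norm_eq_abs]
    _ ≤ a ^ (-(2*α)) * ((1 + 2*C0/r) * a ^ (2*α-1) * C2) := by
        have h0 : (0:ℝ) ≤ a ^ (-(2*α)) := Real.rpow_nonneg ha.le _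
        have h2 := hC2 y hy
        have h3 : (0:ℝ) ≤ b ^ (2*α-1) := Real.rpow_nonneg hb.le _
        have h4 : b ^ (2*α-1) * |iteratedDeriv 2 U y| ≤ (1 + 2*C0/r) * a ^ (2*α-1) * C2 := by
          apply mul_le_mul hbp h2 (abs_nonneg _)
          positivity
        exact mul_le_mul_of_nonneg_left h4 h0
    _ = (1 + 2*C0/r) * (a ^ (-(2*α)) * a ^ (2*α-1)) * C2 := by ring
    _ = (1 + 2*C0/r) * a ^ (-(2*α) + (2*α-1)) * C2 := by
        rw [← Real.rpow_add ha]
    _ = (1 + 2*C0/r) * a ^ (-1:ℝ) * C2 := by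
        rw [show -(2*α) + (2*α-1) = (-1:ℝ) by ring]
    _ ≤ (1 + 2*C0/r) * r⁻¹ * C2 := by
        rw [Real.rpow_neg_one]
        have : a⁻¹ ≤ r⁻¹ := by
          apply inv_anti₀ hr hra.le
        apply mul_le_mul_of_nonneg_right _ hC2'
        apply mul_le_mul_of_nonneg_left this (by linarith)
    _ = K1 r C0 C2 := by rw [K1]; ring

lemma K1_nonneg (hr : 0 < r) (hC0' : 0 ≤ C0) (hC2' : 0 ≤ C2) : 0 ≤ K1 r C0 C2 := by
  rw [K1]; positivity

end FPN2

namespace Part2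
open FPN FPN2 intervalIntegral MeasureTheory

lemma uIoc_sub {z w x : ℝ} (hz : z ∈ Icc (-1:ℝ) 1) (hw : w ∈ Icc (-1:ℝ) 1)
    (hx : x ∈ uIoc w z) : x ∈ Icc (-1:ℝ) 1 :=
  uIcc_subset_Icc hw hz (uIoc_subset_uIcc hx)

lemma prim_diff_bound {h : ℝ → ℂ}
    (hint : ∀ a b : ℝ, IntervalIntegrable h volume a b) {C : ℝ}
    (hC : ∀ x ∈ Icc (-1:ℝ) 1, ‖h x‖ ≤ C) {z w : ℝ}
    (hz : z ∈ Icc (-1:ℝ) 1) (hw : w ∈ Icc (-1:ℝ) 1) :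
    ‖(∫ x in (-1:ℝ)..z, h x) - ∫ x in (-1:ℝ)..w, h x‖ ≤ C * |z - w| := by
  rw [integral_interval_sub_left (hint _ _) (hint _ _)]
  exact norm_integral_le_of_norm_le_const fun x hx => hC x (uIoc_sub hz hw hx)

lemma prim_bound {h : ℝ → ℂ}
    (hint : ∀ a b : ℝ, IntervalIntegrable h volume a b) {C : ℝ}
    (hC : ∀ x ∈ Icc (-1:ℝ) 1, ‖h x‖ ≤ C) {z : ℝ} (hz : z ∈ Icc (-1:ℝ) 1) :
    ‖∫ x in (-1:ℝ)..z, h x‖ ≤ 2 * C := by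
  have hm : (-1:ℝ) ∈ Icc (-1:ℝ) 1 := by constructor <;> norm_num
  have := prim_diff_bound hint hC hz hm
  rw [integral_same, sub_zero] at this
  have hC0 : 0 ≤ C := le_trans (norm_nonneg _) (hC _ hm)
  have : |z - -1| ≤ 2 := by
    rw [abs_le]
    constructor <;> [linarith [hz.1]; linarith [hz.2]]
  nlinarith [prim_diff_bound hint hC hz hm, integral_same (a := (-1:ℝ)) (f := h) (μ := volume)]

variable {U : ℝ → ℝ} {α : ℝ} {c : ℂ} {r C0 C2 : ℝ}

noncomputable def Inn (U : ℝ → ℝ) (α : ℝ) (c : ℂ) (f : ℝ → ℂ) : ℝ → ℂ :=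
  fun x => ∫ q in (-1:ℝ)..x, g2 U α c q * f q

variable (hUc : Continuous U) (hU2 : Continuous (iteratedDeriv 2 U)) (hc : c.im ≠ 0)
include hUc hU2 hc

lemma cont_Inn {f : ℝ → ℂ} (hf : Continuous f) : Continuous (Inn U α c f) :=
  intervalIntegral.continuous_primitive
    (fun a b => ((cont_g2 α hUc hU2 hc).mul hf).intervalIntegrable a b) _

omit hUc hU2 hc in
lemma Sop_apply (f : ℝ → ℂ) (z : ℝ) :
    Sop U α c f z = ∫ x in (-1:ℝ)..z, g1 U α c x * Inn U α c f x := by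
  rw [Sop_eq]; simp only [Inn]

lemma cont_Sop {f : ℝ → ℂ} (hf : Continuous f) : Continuous (Sop U α c f) := by
  have : Continuous fun x => g1 U α c x * Inn U α c f x :=
    (cont_g1 α hUc hc).mul (cont_Inn hUc hU2 hc hf)
  have h2 := intervalIntegral.continuous_primitive (μ := volume)
    (fun a b => this.intervalIntegrable a b) (-1 : ℝ)
  convert h2 using 1
  funext z; rw [Sop_apply]

omit hU2 in
lemma cont_Dfun : Continuous (Dfun U α c) :=
  intervalIntegral.continuous_primitive
    (fun a b => (cont_g1 α hUc hc).intervalIntegrable a b) _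

end Part2

namespace Part3
open FPN FPN2 Part2 intervalIntegral MeasureTheory

variable {U : ℝ → ℝ} {α : ℝ} {c : ℂ} {r C0 C2 : ℝ} {f g : ℝ → ℂ}

lemma neg_one_mem : (-1:ℝ) ∈ Icc (-1:ℝ) 1 := by constructor <;> norm_num

lemma uIcc_sub {z x : ℝ} (hz : z ∈ Icc (-1:ℝ) 1) (hx : x ∈ uIcc (-1:ℝ) z) :
    x ∈ Icc (-1:ℝ) 1 := uIcc_subset_Icc neg_one_mem hz hx

lemma Sop_congr (hfg : EqOn f g (Icc (-1:ℝ) 1)) {z : ℝ} (hz : z ∈ Icc (-1:ℝ) 1) :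
    Sop U α c f z = Sop U α c g z := by
  rw [Sop_apply, Sop_apply]
  apply integral_congr
  intro x hx
  have hxI := uIcc_sub hz hx
  show g1 U α c x * Inn U α c f x = g1 U α c x * Inn U α c g x
  congr 1
  rw [Inn, Inn]
  apply integral_congr
  intro q hq
  have hqI := uIcc_sub hxI hq
  show g2 U α c q * f q = g2 U α c q * g q
  rw [hfg hqI]

lemma Inn_add (hUc : Continuous U) (hU2 : Continuous (iteratedDeriv 2 U)) (hc : c.im ≠ 0)
    (hf : Continuous f) (hg : Continuous g) (x : ℝ) :
    Inn U α c (f + g) x = Inn U α c f x + Inn U α c g x := by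
  simp only [Inn, Pi.add_apply, mul_add]
  exact integral_add (((cont_g2 α hUc hU2 hc).mul hf).intervalIntegrable _ _)
    (((cont_g2 α hUc hU2 hc).mul hg).intervalIntegrable _ _)

lemma Sop_add (hUc : Continuous U) (hU2 : Continuous (iteratedDeriv 2 U)) (hc : c.im ≠ 0)
    (hf : Continuous f) (hg : Continuous g) (z : ℝ) :
    Sop U α c (f + g) z = Sop U α c f z + Sop U α c g z := by
  rw [Sop_apply, Sop_apply, Sop_apply]
  have h1 : ∀ x, g1 U α c x * Inn U α c (f + g) x
      = g1 U α c x * Inn U α c f x + g1 U α c x * Inn U α c g x := by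
    intro x
    rw [Inn_add hUc hU2 hc hf hg, mul_add]
  simp only [h1]
  exact integral_add
    (((cont_g1 α hUc hc).mul (cont_Inn hUc hU2 hc hf)).intervalIntegrable _ _)
    (((cont_g1 α hUc hc).mul (cont_Inn hUc hU2 hc hg)).intervalIntegrable _ _)

lemma Sop_smul (m : ℂ) (f : ℝ → ℂ) (z : ℝ) :
    Sop U α c (fun x => m * f x) z = m * Sop U α c f z := by
  rw [Sop_apply, Sop_apply]
  have h1 : ∀ x, Inn U α c (fun x => m * f x) x = m * Inn U α c f x := by
    intro x
    rw [Inn]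
    simp only [mul_left_comm _ m _]
    rw [intervalIntegral.integral_const_mul]
    rfl
  simp only [h1, mul_left_comm _ m _]
  rw [intervalIntegral.integral_const_mul]

lemma hm_nonneg {m : ℝ} (hm : ∀ q ∈ Icc (-1:ℝ) 1, ‖f q‖ ≤ m) : 0 ≤ m :=
  le_trans (norm_nonneg _) (hm _ neg_one_mem)

lemma outer_bound (hr : 0 < r) (him : r < c.im) (hα : 1/2 < α) (hα1 : α ≤ 1)
    (hC0 : ∀ x ∈ Icc (-1:ℝ) 1, |U x| ≤ C0)
    (hC2 : ∀ x ∈ Icc (-1:ℝ) 1, |iteratedDeriv 2 U x| ≤ C2)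
    {m : ℝ} (hm : ∀ q ∈ Icc (-1:ℝ) 1, ‖f q‖ ≤ m)
    {x : ℝ} (hx : x ∈ Icc (-1:ℝ) 1) :
    ‖g1 U α c x * Inn U α c f x‖ ≤ 2 * (K1 r C0 C2 * m) := by
  have hm0 : 0 ≤ m := hm_nonneg hm
  have hK0 : 0 ≤ K1 r C0 C2 := K1_nonneg hr
    (le_trans (abs_nonneg _) (hC0 _ neg_one_mem))
    (le_trans (abs_nonneg _) (hC2 _ neg_one_mem))
  rw [Inn, ← intervalIntegral.integral_const_mul]
  have h2 : ‖∫ q in (-1:ℝ)..x, g1 U α c x * (g2 U α c q * f q)‖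
      ≤ (K1 r C0 C2 * m) * |x - (-1)| := by
    apply intervalIntegral.norm_integral_le_of_norm_le_const
    intro q hq
    have hqI : q ∈ Icc (-1:ℝ) 1 := uIoc_sub hx neg_one_mem hq
    rw [← mul_assoc, norm_mul]
    exact mul_le_mul (key_bound hr him hα hα1 hC0 hC2 hx hqI) (hm q hqI)
      (norm_nonneg _) hK0
  have h3 : |x - (-1)| ≤ 2 := by
    rw [abs_le]; constructor <;> [linarith [hx.1]; linarith [hx.2]]
  have h4 := mul_le_mul_of_nonneg_left h3 (mul_nonneg hK0 hm0)
  calc ‖∫ q in (-1:ℝ)..x, g1 U α c x * (g2 U α c q * f q)‖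
      ≤ K1 r C0 C2 * m * |x - (-1)| := h2
    _ ≤ K1 r C0 C2 * m * 2 := h4
    _ = 2 * (K1 r C0 C2 * m) := by ring

lemma Sop_diff_bound (hUc : Continuous U) (hU2 : Continuous (iteratedDeriv 2 U))
    (hr : 0 < r) (him : r < c.im) (hα : 1/2 < α) (hα1 : α ≤ 1)
    (hC0 : ∀ x ∈ Icc (-1:ℝ) 1, |U x| ≤ C0)
    (hC2 : ∀ x ∈ Icc (-1:ℝ) 1, |iteratedDeriv 2 U x| ≤ C2)
    {m : ℝ} (hm : ∀ q ∈ Icc (-1:ℝ) 1, ‖f q‖ ≤ m)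
    (hf : Continuous f) {z w : ℝ}
    (hz : z ∈ Icc (-1:ℝ) 1) (hw : w ∈ Icc (-1:ℝ) 1) :
    ‖Sop U α c f z - Sop U α c f w‖ ≤ 2 * (K1 r C0 C2 * m) * |z - w| := by
  have hc : c.im ≠ 0 := (hr.trans him).ne'
  rw [Sop_apply, Sop_apply]
  exact prim_diff_bound
    (fun a b => ((cont_g1 α hUc hc).mul (cont_Inn hUc hU2 hc hf)).intervalIntegrable a b)
    (fun x hx => outer_bound hr him hα hα1 hC0 hC2 hm hx) hz hw

lemma Sop_le (hUc : Continuous U) (hU2 : Continuous (iteratedDeriv 2 U))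
    (hr : 0 < r) (him : r < c.im) (hα : 1/2 < α) (hα1 : α ≤ 1)
    (hC0 : ∀ x ∈ Icc (-1:ℝ) 1, |U x| ≤ C0)
    (hC2 : ∀ x ∈ Icc (-1:ℝ) 1, |iteratedDeriv 2 U x| ≤ C2)
    {m : ℝ} (hm : ∀ q ∈ Icc (-1:ℝ) 1, ‖f q‖ ≤ m)
    (hf : Continuous f) {z : ℝ} (hz : z ∈ Icc (-1:ℝ) 1) :
    ‖Sop U α c f z‖ ≤ 4 * (K1 r C0 C2 * m) := by
  have hc : c.im ≠ 0 := (hr.trans him).ne'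
  rw [Sop_apply]
  have := prim_bound
    (fun a b => ((cont_g1 α hUc hc).mul (cont_Inn hUc hU2 hc hf)).intervalIntegrable a b)
    (fun x hx => outer_bound hr him hα hα1 hC0 hC2 hm hx) hz
  simp only [Pi.mul_apply] at this
  linarith

lemma Dfun_diff_bound (hUc : Continuous U)
    (hr : 0 < r) (him : r < c.im) (hα : 1/2 < α) (hα1 : α ≤ 1)
    {z w : ℝ} (hz : z ∈ Icc (-1:ℝ) 1) (hw : w ∈ Icc (-1:ℝ) 1) :
    ‖Dfun U α c z - Dfun U α c w‖ ≤ LD r * |z - w| := by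
  have hc : c.im ≠ 0 := (hr.trans him).ne'
  exact prim_diff_bound (fun a b => (cont_g1 α hUc hc).intervalIntegrable a b)
    (fun x _ => g1_bound hr him hα hα1 x) hz hw

end Part3

namespace Part4
open FPN FPN2 Part2 Part3 intervalIntegral MeasureTheory

noncomputable abbrev II := Icc (-1:ℝ) 1

noncomputable def EE (f : C(II, ℂ)) : ℝ → ℂ := fun x => f (projIcc (-1) 1 (by norm_num) x)

lemma cont_EE (f : C(II, ℂ)) : Continuous (EE f) :=
  f.continuous.comp continuous_projIcc

lemma EE_eq (f : C(II, ℂ)) {x : ℝ} (hx : x ∈ Icc (-1:ℝ) 1) : EE f x = f ⟨x, hx⟩ := by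
  rw [EE, projIcc_of_mem]

lemma EE_norm (f : C(II, ℂ)) {x : ℝ} (hx : x ∈ Icc (-1:ℝ) 1) : ‖EE f x‖ ≤ ‖f‖ := by
  rw [EE_eq f hx]; exact f.norm_coe_le_norm _

variable {U : ℝ → ℝ} {α : ℝ} {c : ℂ} {r C0 C2 : ℝ}

noncomputable def SL (U : ℝ → ℝ) (α : ℝ) (c : ℂ) (hUc : Continuous U)
    (hU2 : Continuous (iteratedDeriv 2 U)) (hc : c.im ≠ 0) : C(II, ℂ) →ₗ[ℂ] C(II, ℂ) where
  toFun f := ContinuousMap.mk (fun z => Sop U α c (EE f) z.1)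
    ((cont_Sop hUc hU2 hc (cont_EE f)).comp continuous_subtype_val)
  map_add' f g := by
    ext z
    have h1 : EE (f + g) = EE f + EE g := by
      funext x; simp [EE]
    show Sop U α c (EE (f+g)) z.1 = Sop U α c (EE f) z.1 + Sop U α c (EE g) z.1
    rw [h1, Sop_add hUc hU2 hc (cont_EE f) (cont_EE g)]
  map_smul' m f := by
    ext z
    have h1 : EE (m • f) = fun x => m * EE f x := by
      funext x; simp [EE]
    show Sop U α c (EE (m • f)) z.1 = m * Sop U α c (EE f) z.1
    rw [h1, Sop_smul]

lemma SL_apply (hUc : Continuous U) (hU2 : Continuous (iteratedDeriv 2 U)) (hc : c.im ≠ 0)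
    (f : C(II, ℂ)) (z : II) :
    SL U α c hUc hU2 hc f z = Sop U α c (EE f) z.1 := rfl

lemma SL_norm (hUc : Continuous U) (hU2 : Continuous (iteratedDeriv 2 U))
    (hr : 0 < r) (him : r < c.im) (hα : 1/2 < α) (hα1 : α ≤ 1)
    (hC0 : ∀ x ∈ Icc (-1:ℝ) 1, |U x| ≤ C0)
    (hC2 : ∀ x ∈ Icc (-1:ℝ) 1, |iteratedDeriv 2 U x| ≤ C2)
    (f : C(II, ℂ)) :
    ‖SL U α c hUc hU2 ((hr.trans him).ne' : c.im ≠ 0) f‖ ≤ (4 * K1 r C0 C2) * ‖f‖ := by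
  have hK0 : 0 ≤ K1 r C0 C2 := K1_nonneg hr
    (le_trans (abs_nonneg _) (hC0 _ neg_one_mem))
    (le_trans (abs_nonneg _) (hC2 _ neg_one_mem))
  rw [ContinuousMap.norm_le _ (by positivity)]
  intro z
  rw [SL_apply]
  have := Sop_le hUc hU2 hr him hα hα1 hC0 hC2
    (fun q hq => EE_norm f hq) (cont_EE f) z.2
  calc ‖Sop U α c (EE f) z.1‖ ≤ 4 * (K1 r C0 C2 * ‖f‖) := this
    _ = (4 * K1 r C0 C2) * ‖f‖ := by ring

noncomputable def DX (U : ℝ → ℝ) (α : ℝ) (c : ℂ) (hUc : Continuous U) (hc : c.im ≠ 0) :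
    C(II, ℂ) := ContinuousMap.mk (fun z => Dfun U α c z.1)
  ((cont_Dfun hUc hc).comp continuous_subtype_val)

end Part4


set_option maxHeartbeats 1000000 in
set_option synthInstance.maxHeartbeats 400000 in
open FPN FPN2 Part2 Part3 Part4 intervalIntegral MeasureTheory in
/-- **Solvability of the fixed point equation by a Neumann series.** For each `r > 0`
there is `α_r ∈ (1/2,1)` such that for all `c` with `Im c > r`, `Re c ∈ U_s([-1,1])`
and all `α ∈ (α_r, 1)`, the equation `Φ = D_α(c) + (1-α) S_{α,c}[Φ]` has a unique
solution `Φ_{α,c} ∈ Y`, given by `Φ_{α,c} = Σ_{n≥0} (1-α)^n S_{α,c}^n [D_α(c)]`. -/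
theorem fixed_point_neumann
    (U : ℝ → ℝ) (hU : ContDiff ℝ (⊤ : ℕ∞) U)
    (hmono : StrictMonoOn U (Icc (-1:ℝ) 1) ∨ StrictAntiOn U (Icc (-1:ℝ) 1))
    (r : ℝ) (hr : 0 < r) :
    ∃ αr ∈ Ioo (1/2 : ℝ) 1,
      ∀ c : ℂ, r < c.im → c.re ∈ U '' Icc (-1:ℝ) 1 →
      ∀ α ∈ Ioo αr 1,
        ∃ Φ : ℝ → ℂ,
          (memY Φ ∧ ∀ z ∈ Icc (-1:ℝ) 1,
              Φ z = Dfun U α c z + Complex.ofReal (1 - α) * Sop U α c Φ z) ∧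
          (∀ Ψ : ℝ → ℂ,
            (memY Ψ ∧ ∀ z ∈ Icc (-1:ℝ) 1,
                Ψ z = Dfun U α c z + Complex.ofReal (1 - α) * Sop U α c Ψ z) →
            ∀ z ∈ Icc (-1:ℝ) 1, Ψ z = Φ z) ∧
          (∀ z ∈ Icc (-1:ℝ) 1,
            Φ z = ∑' n : ℕ,
              Complex.ofReal (1 - α) ^ n * ((Sop U α c)^[n] (Dfun U α c)) z) := by
  classical
  have hUc : Continuous U := hU.continuous
  have hU2 : Continuous (iteratedDeriv 2 U) := hU.continuous_iteratedDeriv 2 (WithTop.coe_le_coe.mpr le_top)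
  obtain ⟨C0, hC0⟩ := isCompact_Icc.exists_bound_of_continuousOn
    (hUc.continuousOn : ContinuousOn U (Icc (-1:ℝ) 1))
  obtain ⟨C2, hC2⟩ := isCompact_Icc.exists_bound_of_continuousOn
    (hU2.continuousOn : ContinuousOn (iteratedDeriv 2 U) (Icc (-1:ℝ) 1))
  simp only [Real.norm_eq_abs] at hC0 hC2
  set K := K1 r C0 C2 with hKdef
  have hK0 : 0 ≤ K := K1_nonneg hr
    (le_trans (abs_nonneg _) (hC0 _ neg_one_mem))
    (le_trans (abs_nonneg _) (hC2 _ neg_one_mem))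
  refine ⟨max (1 - 1/(2*(4*K+1))) (3/4), ⟨?_, ?_⟩, ?_⟩
  · have : (1/2 : ℝ) < 3/4 := by norm_num
    exact lt_of_lt_of_le this (le_max_right _ _)
  · apply max_lt
    · have : 0 < 1/(2*(4*K+1)) := by positivity
      linarith
    · norm_num
  intro c him hre α hαIoo
  obtain ⟨hαl, hα1'⟩ := hαIoo
  have hα2 : 1/2 < α := by
    have h34 : (3/4:ℝ) ≤ max (1 - 1/(2*(4*K+1))) (3/4) := le_max_right _ _
    linarith
  have hα1 : α ≤ 1 := hα1'.le
  have hαpos : 0 ≤ 1 - α := by linarith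
  have hhalf : (1 - α) * (4*K) ≤ 1/2 := by
    have h1 : 1 - 1/(2*(4*K+1)) ≤ max (1 - 1/(2*(4*K+1))) (3/4) := le_max_left _ _
    have h2 : 1 - α ≤ 1/(2*(4*K+1)) := by linarith
    have h3 : (0:ℝ) < 2*(4*K+1) := by positivity
    have h4 : (1 - α) * (4*K) ≤ (1/(2*(4*K+1))) * (4*K) :=
      mul_le_mul_of_nonneg_right h2 (by positivity)
    have h5 : (1/(2*(4*K+1))) * (4*K) ≤ 1/2 := by
      rw [div_mul_eq_mul_div, div_le_div_iff₀ h3 (by norm_num)]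
      ring_nf
      nlinarith
    linarith
  have hc : c.im ≠ 0 := (hr.trans him).ne'
  -- the operator S and T = (1-α) • S
  set S : C(II, ℂ) →L[ℂ] C(II, ℂ) :=
    LinearMap.mkContinuous (SL U α c hUc hU2 hc) (4*K)
      (SL_norm hUc hU2 hr him hα2 hα1 hC0 hC2) with hSdef
  have hS_apply : ∀ (f : C(II, ℂ)) (z : II), S f z = Sop U α c (EE f) z.1 := fun f z => rfl
  have hS_norm : ∀ f : C(II, ℂ), ‖S f‖ ≤ (4*K) * ‖f‖ :=
    fun f => SL_norm hUc hU2 hr him hα2 hα1 hC0 hC2 f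
  set T : C(II, ℂ) →L[ℂ] C(II, ℂ) := (((1 - α : ℝ) : ℂ)) • S with hTdef
  have hT_apply : ∀ (f : C(II, ℂ)) (z : II),
      T f z = ((1 - α : ℝ) : ℂ) * Sop U α c (EE f) z.1 := fun f z => rfl
  have hnorm1α : ‖((1 - α : ℝ) : ℂ)‖ = 1 - α := by
    rw [Complex.norm_real, Real.norm_eq_abs, abs_of_nonneg hαpos]
  have hT_norm : ∀ f : C(II, ℂ), ‖T f‖ ≤ 2⁻¹ * ‖f‖ := by
    intro f
    have h1 : T f = ((1 - α : ℝ) : ℂ) • S f := rfl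
    rw [h1]
    rw [norm_smul (((1 - α : ℝ)) : ℂ) (S f), hnorm1α]
    have h2 : (1 - α) * ‖S f‖ ≤ (1 - α) * ((4*K) * ‖f‖) :=
      mul_le_mul_of_nonneg_left (hS_norm f) hαpos
    have h3 : (1 - α) * ((4*K) * ‖f‖) = ((1-α) * (4*K)) * ‖f‖ := by ring
    have h4 : ((1-α) * (4*K)) * ‖f‖ ≤ (1/2) * ‖f‖ :=
      mul_le_mul_of_nonneg_right hhalf (norm_nonneg _)
    rw [show (2:ℝ)⁻¹ = 1/2 by norm_num]
    linarith
  have hT_pow : ∀ (n : ℕ) (f : C(II, ℂ)), ‖(T^n) f‖ ≤ (2⁻¹)^n * ‖f‖ := by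
    intro n
    induction n with
    | zero => intro f; simp
    | succ n ih =>
      intro f
      rw [pow_succ']
      rw [ContinuousLinearMap.mul_apply]
      calc ‖T ((T^n) f)‖ ≤ 2⁻¹ * ‖(T^n) f‖ := hT_norm _
        _ ≤ 2⁻¹ * ((2⁻¹)^n * ‖f‖) := by
            have := ih f
            nlinarith [norm_nonneg ((T^n) f)]
        _ = (2⁻¹)^(n+1) * ‖f‖ := by ring
  have hTS : ∀ (n : ℕ) (f : C(II, ℂ)), (T^n) f = (((1 - α : ℝ) : ℂ))^n • ((S^n) f) := by
    intro n
    induction n with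
    | zero => intro f; simp
    | succ n ih =>
      intro f
      rw [pow_succ', ContinuousLinearMap.mul_apply, ih f]
      rw [T.map_smul (((1 - α : ℝ) : ℂ)^n) ((S^n) f)]
      have h5 : T ((S^n) f) = ((1 - α : ℝ) : ℂ) • S ((S^n) f) := rfl
      rw [h5, smul_smul, pow_succ' S n, ContinuousLinearMap.mul_apply,
        ← pow_succ (((1 - α : ℝ) : ℂ)) n]
  set D : C(II, ℂ) := DX U α c hUc hc with hDdef
  have hD_apply : ∀ z : II, D z = Dfun U α c z.1 := fun z => rfl
  set g : ℕ → C(II, ℂ) := fun n => (T^n) D with hgdef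
  have hgs : Summable g := by
    apply Summable.of_norm_bounded (g := fun n => (2⁻¹)^n * ‖D‖)
    · exact (summable_geometric_of_lt_one (by norm_num) (by norm_num)).mul_right _
    · exact fun n => hT_pow n D
  set φ : C(II, ℂ) := ∑' n, g n with hφdef
  have hfix : φ = D + T φ := by
    have h0 : g 0 = D := by rw [hgdef]; simp
    have hsucc : ∀ n, g (n+1) = T (g n) := by
      intro n
      rw [hgdef]
      simp only
      rw [pow_succ', ContinuousLinearMap.mul_apply]
    calc φ = g 0 + ∑' n, g (n+1) := hgs.tsum_eq_zero_add
      _ = D + ∑' n, T (g n) := by rw [h0]; congr 1; exact tsum_congr hsucc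
      _ = D + T φ := by rw [hφdef, T.map_tsum hgs]
  -- bridge between Sop iterates and S iterates
  have hbridge : ∀ (n : ℕ) (z : ℝ) (hz : z ∈ Icc (-1:ℝ) 1),
      ((Sop U α c)^[n] (Dfun U α c)) z = ((S^n) D) ⟨z, hz⟩ := by
    intro n
    induction n with
    | zero => intro z hz; simp [hD_apply]
    | succ n ih =>
      intro z hz
      rw [Function.iterate_succ_apply']
      have heq : EqOn ((Sop U α c)^[n] (Dfun U α c)) (EE ((S^n) D)) (Icc (-1:ℝ) 1) := by
        intro q hq
        rw [ih q hq, EE_eq]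
      rw [Sop_congr heq hz]
      rw [show Sop U α c (EE ((S^n) D)) z = (S ((S^n) D)) ⟨z, hz⟩ from rfl]
      rw [pow_succ', ContinuousLinearMap.mul_apply]
  -- the solution
  set Φ : ℝ → ℂ := fun z => ∑' n : ℕ,
    Complex.ofReal (1 - α) ^ n * ((Sop U α c)^[n] (Dfun U α c)) z with hΦdef
  have hΦφ : ∀ (z : ℝ) (hz : z ∈ Icc (-1:ℝ) 1), Φ z = φ ⟨z, hz⟩ := by
    intro z hz
    have h1 : φ ⟨z, hz⟩ = (ContinuousMap.evalCLM ℂ (⟨z, hz⟩ : II)) φ := rfl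
    rw [h1, hφdef, (ContinuousMap.evalCLM ℂ (⟨z, hz⟩ : II)).map_tsum hgs]
    apply tsum_congr
    intro n
    have h2 : (ContinuousMap.evalCLM ℂ (⟨z, hz⟩ : II)) (g n) = ((T^n) D) ⟨z, hz⟩ := rfl
    rw [h2, hTS n D]
    have h3 : ((((1 - α : ℝ) : ℂ)^n • ((S^n) D)) : C(II, ℂ)) ⟨z, hz⟩
        = ((1 - α : ℝ) : ℂ)^n * ((S^n) D) ⟨z, hz⟩ := rfl
    rw [h3, hbridge n z hz]
  have hEEφ : EqOn (EE φ) Φ (Icc (-1:ℝ) 1) := by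
    intro q hq
    rw [EE_eq φ hq, hΦφ q hq]
  -- fixed point equation for Φ
  have hΦeq : ∀ z ∈ Icc (-1:ℝ) 1,
      Φ z = Dfun U α c z + Complex.ofReal (1 - α) * Sop U α c Φ z := by
    intro z hz
    rw [hΦφ z hz]
    conv_lhs => rw [hfix]
    have h1 : (D + T φ) ⟨z, hz⟩ = D ⟨z, hz⟩ + T φ ⟨z, hz⟩ := rfl
    rw [h1, hD_apply, hT_apply]
    congr 1
    congr 1
    exact Sop_congr hEEφ hz
  refine ⟨Φ, ⟨⟨?_, ?_⟩, hΦeq⟩, ?_, fun z hz => rfl⟩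
  · -- Φ (-1) = 0
    have h1 := hΦeq (-1) neg_one_mem
    have h2 : Dfun U α c (-1) = 0 := integral_same
    have h3 : Sop U α c Φ (-1) = 0 := by rw [Sop_apply]; exact integral_same
    rw [h2, h3] at h1
    simpa using h1
  · -- Lipschitz
    refine ⟨Real.toNNReal (LD r + 2 * (K * ‖φ‖)), ?_⟩
    apply LipschitzOnWith.of_dist_le_mul
    intro x hx y hy
    have hL0 : 0 ≤ LD r + 2 * (K * ‖φ‖) := by
      have := (LD_pos hr).le
      positivity
    rw [Real.coe_toNNReal _ hL0]
    rw [dist_eq_norm, Real.dist_eq]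
    rw [hΦeq x hx, hΦeq y hy]
    have hm : ∀ q ∈ Icc (-1:ℝ) 1, ‖EE φ q‖ ≤ ‖φ‖ := fun q hq => EE_norm φ hq
    have hsop : ∀ w ∈ Icc (-1:ℝ) 1, Sop U α c Φ w = Sop U α c (EE φ) w :=
      fun w hw => (Sop_congr hEEφ hw).symm
    rw [hsop x hx, hsop y hy]
    have hd := Dfun_diff_bound hUc hr him hα2 hα1 hx hy
    have hs := Sop_diff_bound hUc hU2 hr him hα2 hα1 hC0 hC2 hm (cont_EE φ) hx hy
    calc ‖(Dfun U α c x + Complex.ofReal (1-α) * Sop U α c (EE φ) x)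
          - (Dfun U α c y + Complex.ofReal (1-α) * Sop U α c (EE φ) y)‖
        = ‖(Dfun U α c x - Dfun U α c y)
            + Complex.ofReal (1-α) * (Sop U α c (EE φ) x - Sop U α c (EE φ) y)‖ := by
          congr 1; ring
      _ ≤ ‖Dfun U α c x - Dfun U α c y‖
            + ‖Complex.ofReal (1-α) * (Sop U α c (EE φ) x - Sop U α c (EE φ) y)‖ :=
          norm_add_le _ _
      _ ≤ LD r * |x - y| + 1 * (2 * (K * ‖φ‖) * |x - y|) := by
          rw [norm_mul, hnorm1α]
          gcongr
          linarith
      _ ≤ (LD r + 2 * (K * ‖φ‖)) * |x - y| := by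
          have := abs_nonneg (x - y)
          nlinarith
  · -- uniqueness
    rintro Ψ ⟨⟨hΨ0, L, hLip⟩, heq⟩ z hz
    set ψ : C(II, ℂ) := ContinuousMap.mk ((Icc (-1:ℝ) 1).restrict Ψ)
      (hLip.continuousOn.restrict) with hψdef
    have hψ_apply : ∀ p : II, ψ p = Ψ p.1 := fun p => rfl
    have hEEψ : EqOn (EE ψ) Ψ (Icc (-1:ℝ) 1) := by
      intro q hq
      rw [EE_eq ψ hq, hψ_apply]
    have hψfix : ψ = D + T ψ := by
      ext p
      have h1 : (D + T ψ) p = D p + T ψ p := rfl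
      rw [h1, hψ_apply, hD_apply, hT_apply, heq p.1 p.2]
      congr 2
      exact (Sop_congr hEEψ p.2).symm
    have hzero : ψ - φ = T (ψ - φ) := by
      rw [map_sub]
      conv_lhs => rw [hψfix, hfix]
      abel
    have hn : ‖ψ - φ‖ = 0 := by
      by_contra hne
      have h1 : 0 < ‖ψ - φ‖ := lt_of_le_of_ne (norm_nonneg _) (Ne.symm hne)
      have h2 := hT_norm (ψ - φ)
      rw [← hzero] at h2
      linarith
    have hψφ : ψ = φ := by
      rw [← sub_eq_zero]
      exact norm_eq_zero.mp hn
    rw [hΦφ z hz, ← hψφ, hψ_apply]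
end

section
/- For U_s(z) = tanh(βz) on [-1,1] with β > 0 sufficiently large, there exists c ∈ ℂ with Im(c) > 0 such that ∫_{-1}^{1} (tanh(βz) - c)^{-2} dz = 0. -/
open Set

open MeasureTheory


lemma my_tanh_lt_one (x : ℝ) : Real.tanh x < 1 := by
  rw [Real.tanh_eq_sinh_div_cosh, div_lt_one (Real.cosh_pos x)]
  nlinarith [Real.cosh_sub_sinh x, Real.exp_pos (-x)]

lemma my_neg_one_lt_tanh (x : ℝ) : -1 < Real.tanh x := by
  have := my_tanh_lt_one (-x)
  rw [Real.tanh_neg] at this; linarith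

lemma my_tanh_mono {a b : ℝ} (h : a ≤ b) : Real.tanh a ≤ Real.tanh b := by
  rw [Real.tanh_eq_sinh_div_cosh, Real.tanh_eq_sinh_div_cosh,
    div_le_div_iff₀ (Real.cosh_pos a) (Real.cosh_pos b)]
  have hs : Real.sinh (a-b) ≤ 0 := by
    rw [show a-b = -(b-a) by ring, Real.sinh_neg]
    linarith [Real.sinh_nonneg_iff.mpr (sub_nonneg.mpr h)]
  nlinarith [Real.sinh_sub a b, hs]

lemma my_tanh_one : (0.71:ℝ) ≤ Real.tanh 1 := by
  rw [Real.tanh_eq_sinh_div_cosh, le_div_iff₀ (Real.cosh_pos 1)]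
  rw [Real.sinh_eq, Real.cosh_eq]
  have h := Real.exp_one_gt_d9
  have h2 : Real.exp (-1) = 1 / Real.exp 1 := by rw [Real.exp_neg]; ring
  rw [h2]
  have hp : (0:ℝ) < Real.exp 1 := Real.exp_pos 1
  have hx : 1/Real.exp 1 < 0.368 := by
    rw [div_lt_iff₀ hp]; nlinarith
  nlinarith

lemma my_continuous_tanh : Continuous Real.tanh := by
  have : Real.tanh = fun x => Real.sinh x / Real.cosh x := by
    funext x; exact Real.tanh_eq_sinh_div_cosh x
  rw [this]
  exact Real.continuous_sinh.div Real.continuous_cosh (fun x => (Real.cosh_pos x).ne')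

lemma my_div_lb {s : ℝ} (h1 : (0.5041:ℝ) ≤ s) (h2 : s ≤ 1) :
    (4:ℝ)/25 ≤ (s - 1/4)/((s + 1/4)^2) := by
  rw [le_div_iff₀ (by positivity)]
  nlinarith [(s - 1/2)*(1 - s)]

lemma my_div_lb2 {s : ℝ} (h1 : (0:ℝ) ≤ s) : (-4:ℝ) ≤ (s - 1/4)/((s + 1/4)^2) := by
  rw [le_div_iff₀ (by positivity)]
  nlinarith

lemma my_decomp (x t : ℝ) (ht : 0 < t) :
    1/((x:ℂ) - t*Complex.I)^2 =
      (((x^2 - t^2)/((x^2+t^2)^2) : ℝ) : ℂ) + (((2*x*t/((x^2+t^2)^2) : ℝ)):ℂ) * Complex.I := by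
  have hd : (x:ℝ)^2 + t^2 ≠ 0 := by positivity
  have hdc : ((x:ℂ)^2 + (t:ℂ)^2) ≠ 0 := by
    have : ((x:ℂ)^2 + (t:ℂ)^2) = ((x^2 + t^2 : ℝ) : ℂ) := by push_cast; ring
    rw [this]; exact_mod_cast hd
  have hD2c : (((x:ℂ)^2 + (t:ℂ)^2)^2) ≠ 0 := pow_ne_zero 2 hdc
  have hne : (x:ℂ) - t*Complex.I ≠ 0 := by
    intro h
    have := congrArg Complex.im h
    simp at this
    exact ht.ne' this
  have h1 : 1/((x:ℂ)-t*Complex.I)^2 = ((x:ℂ)^2-t^2+2*x*t*Complex.I)/(((x:ℂ)^2+t^2)^2) := by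
    rw [div_eq_div_iff (pow_ne_zero 2 hne) hD2c]
    linear_combination (-((t:ℂ)^2*((x:ℂ)^2-t^2) + 2*x*t^3*Complex.I - 4*x^2*t^2)) * Complex.I_sq
  rw [h1]
  push_cast
  field_simp

/-- **Unstable root of the hydrostatic dispersion relation for a tanh shear flow.**
For `U_s(z) = tanh(βz)` with `β > 0` sufficiently large, there exists `c` with
`Im c > 0` such that `∫_{-1}^1 (tanh(βz) - c)^{-2} dz = 0`. -/
theorem tanh_dispersion_unstable_root :
    ∃ β₀ : ℝ, 0 < β₀ ∧ ∀ β : ℝ, β₀ ≤ β →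
      ∃ c : ℂ, 0 < c.im ∧
        (∫ z in (-1:ℝ)..1, 1/(Complex.ofReal (Real.tanh (β*z)) - c)^2) = 0 := by
  refine ⟨30, by norm_num, fun β hβ => ?_⟩
  have hβ0 : (0:ℝ) < β := by linarith
  have hβinv : 1/β ≤ 1/30 := by
    rw [div_le_div_iff₀ hβ0 (by norm_num)]; linarith
  have hβinv0 : 0 < 1/β := by positivity
  set u : ℝ → ℝ := fun z => Real.tanh (β*z) with hu
  have hcu : Continuous u := my_continuous_tanh.comp (continuous_const.mul continuous_id)
  set q : ℝ → ℝ := fun t => max (t^2) (1/4) with hq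
  have hqc : Continuous q := (continuous_pow 2).max continuous_const
  have hq4 : ∀ t, (1/4:ℝ) ≤ q t := fun t => le_max_right _ _
  set G : ℝ → ℝ → ℝ := fun t z => (u z^2 - q t)/((u z^2 + q t)^2) with hG
  have hGdenpos : ∀ t z, (0:ℝ) < (u z^2 + q t) := by
    intro t z; nlinarith [sq_nonneg (u z), hq4 t]
  have hGcont : Continuous (Function.uncurry G) := by
    apply Continuous.div
    · exact ((hcu.comp continuous_snd).pow 2).sub (hqc.comp continuous_fst)
    · exact (((hcu.comp continuous_snd).pow 2).add (hqc.comp continuous_fst)).pow 2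
    · intro p; exact pow_ne_zero 2 (hGdenpos p.1 p.2).ne'
  have hGint : ∀ t a b, IntervalIntegrable (G t) volume a b := by
    intro t a b
    exact (hGcont.comp (continuous_const.prodMk continuous_id)).intervalIntegrable a b
  set F : ℝ → ℝ := fun t => ∫ z in (-1:ℝ)..1, G t z with hF
  have hFcont : Continuous F :=
    intervalIntegral.continuous_parametric_intervalIntegral_of_continuous' hGcont (-1) 1
  -- q values
  have hq1 : q 1 = 1 := by rw [hq]; norm_num
  have hqhalf : q (1/2) = 1/4 := by rw [hq]; norm_num
  -- F 1 < 0
  have hF1 : F 1 < 0 := by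
    have hpos : 0 < ∫ z in (-1:ℝ)..1, -(G 1 z) := by
      apply intervalIntegral.intervalIntegral_pos_of_pos_on ((hGint 1 (-1) 1).neg)
      · intro x _
        rw [hG]
        simp only
        rw [hq1]
        apply neg_pos.mpr
        apply div_neg_of_neg_of_pos
        · nlinarith [my_tanh_lt_one (β*x), my_neg_one_lt_tanh (β*x)]
        · have := hGdenpos 1 x; rw [hq1] at this; positivity
      · norm_num
    rw [intervalIntegral.integral_neg] at hpos
    rw [hF]; linarith
  -- F (1/2) > 0
  have hFhalf : 0 < F (1/2) := by
    have hm1 : (-1:ℝ) ≤ -(1/β) := by linarith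
    have hm2 : (-(1/β):ℝ) ≤ 1/β := by linarith
    have hm3 : (1/β:ℝ) ≤ 1 := by linarith
    have hsplit : F (1/2) = (∫ z in (-1:ℝ)..(-(1/β)), G (1/2) z)
        + ((∫ z in (-(1/β):ℝ)..(1/β), G (1/2) z) + (∫ z in (1/β:ℝ)..1, G (1/2) z)) := by
      have e1 := intervalIntegral.integral_add_adjacent_intervals
        (hGint (1/2) (-1) (-(1/β))) (hGint (1/2) (-(1/β)) 1)
      have e2 := intervalIntegral.integral_add_adjacent_intervals
        (hGint (1/2) (-(1/β)) (1/β)) (hGint (1/2) (1/β) 1)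
      simp only [hF]
      rw [← e1, ← e2]
    have hright : (4/25:ℝ) * (1 - 1/β) ≤ ∫ z in (1/β:ℝ)..1, G (1/2) z := by
      have := intervalIntegral.integral_mono_on (f := fun _ => (4/25:ℝ)) (g := G (1/2)) hm3
        (intervalIntegrable_const) (hGint _ _ _) ?_
      · calc (4/25:ℝ) * (1 - 1/β) = ∫ _ in (1/β:ℝ)..1, (4/25:ℝ) := by
              rw [intervalIntegral.integral_const]; simp [mul_comm]
          _ ≤ _ := this
      · intro x hx
        have h1x : 1 ≤ β*x := by
          calc (1:ℝ) = β*(1/β) := by field_simp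
            _ ≤ β*x := by apply mul_le_mul_of_nonneg_left hx.1 hβ0.le
        have hux : (0.71:ℝ) ≤ u x := le_trans my_tanh_one (by
          rw [hu]; simpa using my_tanh_mono h1x)
        have hux1 : u x < 1 := my_tanh_lt_one _
        rw [hG]; simp only; rw [hqhalf]
        exact my_div_lb (by nlinarith) (by nlinarith)
    have hleft : (4/25:ℝ) * (1 - 1/β) ≤ ∫ z in (-1:ℝ)..(-(1/β)), G (1/2) z := by
      have := intervalIntegral.integral_mono_on (f := fun _ => (4/25:ℝ)) (g := G (1/2)) hm1
        (intervalIntegrable_const) (hGint _ _ _) ?_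
      · calc (4/25:ℝ) * (1 - 1/β) = ∫ _ in (-1:ℝ)..(-(1/β)), (4/25:ℝ) := by
              rw [intervalIntegral.integral_const]; simp; ring
          _ ≤ _ := this
      · intro x hx
        have h1x : β*x ≤ -1 := by
          calc β*x ≤ β*(-(1/β)) := by apply mul_le_mul_of_nonneg_left hx.2 hβ0.le
            _ = -1 := by field_simp
        have hux : u x ≤ -0.71 := by
          have := my_tanh_mono h1x
          rw [show (-1:ℝ) = -(1) by ring, Real.tanh_neg] at this
          rw [hu]; simp only; linarith [my_tanh_one]
        have hux1 : -1 < u x := my_neg_one_lt_tanh _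
        rw [hG]; simp only; rw [hqhalf]
        exact my_div_lb (by nlinarith) (by nlinarith)
    have hmid : (-8/β:ℝ) ≤ ∫ z in (-(1/β):ℝ)..(1/β), G (1/2) z := by
      have := intervalIntegral.integral_mono_on (f := fun _ => (-4:ℝ)) (g := G (1/2)) hm2
        (intervalIntegrable_const) (hGint _ _ _) ?_
      · calc (-8/β:ℝ) = ∫ _ in (-(1/β):ℝ)..(1/β), (-4:ℝ) := by
              rw [intervalIntegral.integral_const]; simp; ring
          _ ≤ _ := this
      · intro x _
        rw [hG]; simp only; rw [hqhalf]
        exact my_div_lb2 (sq_nonneg _)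
    rw [hsplit]
    have h8 : (8:ℝ)/β ≤ 8/30 := by
      rw [div_le_div_iff₀ hβ0 (by norm_num)]; linarith
    have : (-8/β:ℝ) ≥ -(8/30) := by rw [neg_div]; linarith
    nlinarith
  -- IVT
  have h0mem : (0:ℝ) ∈ Icc (F 1) (F (1/2)) := ⟨hF1.le, hFhalf.le⟩
  obtain ⟨t, htmem, ht0⟩ := intermediate_value_Icc' (by norm_num : (1/2:ℝ) ≤ 1)
    hFcont.continuousOn h0mem
  have htpos : (0:ℝ) < t := by linarith [htmem.1]
  have hqt : q t = t^2 := max_eq_left (by nlinarith [htmem.1])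
  -- complex part
  refine ⟨(t:ℂ)*Complex.I, by simp [htpos], ?_⟩
  set f1 : ℝ → ℝ := fun z => ((u z)^2 - t^2)/(((u z)^2+t^2)^2) with hf1
  set f2 : ℝ → ℝ := fun z => 2*(u z)*t/(((u z)^2+t^2)^2) with hf2
  have hdenpos : ∀ z : ℝ, (0:ℝ) < ((u z)^2 + t^2) := by intro z; positivity
  have hcf1 : Continuous f1 := by
    apply Continuous.div ((hcu.pow 2).sub continuous_const)
      (((hcu.pow 2).add continuous_const).pow 2)
    intro z; exact pow_ne_zero 2 (hdenpos z).ne'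
  have hcf2 : Continuous f2 := by
    apply Continuous.div ((continuous_const.mul hcu).mul continuous_const)
      (((hcu.pow 2).add continuous_const).pow 2)
    intro z; exact pow_ne_zero 2 (hdenpos z).ne'
  have heq : ∀ z : ℝ, 1/((u z:ℂ) - (t:ℂ)*Complex.I)^2
      = ((f1 z : ℝ):ℂ) + ((f2 z : ℝ):ℂ)*Complex.I := fun z => my_decomp (u z) t htpos
  have hstep : (∫ z in (-1:ℝ)..1, 1/((u z:ℂ) - (t:ℂ)*Complex.I)^2)
      = ((∫ z in (-1:ℝ)..1, f1 z : ℝ) : ℂ) + ((∫ z in (-1:ℝ)..1, f2 z : ℝ) : ℂ) * Complex.I := by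
    rw [intervalIntegral.integral_congr (g := fun z => ((f1 z : ℝ):ℂ) + ((f2 z : ℝ):ℂ)*Complex.I)
      (fun z _ => heq z)]
    have hc1 : Continuous (fun z : ℝ => ((f1 z : ℝ):ℂ)) := by
      exact Complex.continuous_ofReal.comp hcf1
    have hc2 : Continuous (fun z : ℝ => ((f2 z : ℝ):ℂ) * Complex.I) := by
      exact (Complex.continuous_ofReal.comp hcf2).mul continuous_const
    rw [intervalIntegral.integral_add (hc1.intervalIntegrable _ _) (hc2.intervalIntegrable _ _)]
    rw [intervalIntegral.integral_mul_const, intervalIntegral.integral_ofReal,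
      intervalIntegral.integral_ofReal]
  have hI1 : (∫ z in (-1:ℝ)..1, f1 z) = 0 := by
    have : f1 = G t := by funext z; rw [hf1, hG]; simp only; rw [hqt]
    rw [this]; exact ht0
  have hI2 : (∫ z in (-1:ℝ)..1, f2 z) = 0 := by
    have hoddf2 : ∀ z : ℝ, f2 (-z) = -f2 z := by
      intro z
      have huz : u (-z) = -u z := by rw [hu]; simp only; rw [mul_neg, Real.tanh_neg]
      rw [hf2]; simp only; rw [huz, neg_sq, show 2*(-u z)*t = -(2*u z*t) by ring, neg_div]
    have hcn : (∫ z in (-1:ℝ)..1, f2 (-z)) = ∫ z in (-1:ℝ)..1, f2 z := by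
      rw [intervalIntegral.integral_comp_neg]; norm_num
    have : (∫ z in (-1:ℝ)..1, f2 (-z)) = -∫ z in (-1:ℝ)..1, f2 z := by
      rw [intervalIntegral.integral_congr (g := fun z => -f2 z) (fun z _ => hoddf2 z)]
      exact intervalIntegral.integral_neg
    rw [this] at hcn
    linarith
  calc (∫ z in (-1:ℝ)..1, 1/((Real.tanh (β*z) : ℂ) - (t:ℂ)*Complex.I)^2)
      = (∫ z in (-1:ℝ)..1, 1/((u z:ℂ) - (t:ℂ)*Complex.I)^2) := rfl
    _ = ((∫ z in (-1:ℝ)..1, f1 z : ℝ) : ℂ) + ((∫ z in (-1:ℝ)..1, f2 z : ℝ) : ℂ) * Complex.I := hstep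
    _ = 0 := by rw [hI1, hI2]; simp
end
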